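/- arXiv:2011.03179 — 4 statements merged into one kernel-verified Lean document; each statement's English description precedes it below -/
import Mathlib

section
/- For nonnegative integer n, the polynomial identity ∏_{i=1}^{n} (1+q^i) = 1 + ∑_{i odd, 1 ≤ i ≤ n} q^i ∑_{j=0}^{n-i} q^{binom(j+1,2)} · qbinom(i+j, i) holds, where qbinom denotes the Gaussian binomial coefficient. -/
open Polynomial

/-- The Gaussian binomial coefficient as a polynomial in `q`, defined via the
q-Pascal recurrence `qbinom (a+1) (b+1) = qbinom a b + q^(b+1) * qbinom a (b+1)`. -/
noncomputable def qbinom : ℕ → ℕ → Polynomial ℤ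
  | _, 0 => 1
  | 0, _ + 1 => 0
  | a + 1, b + 1 => qbinom a b + X ^ (b + 1) * qbinom a (b + 1)

/-!
Grouping the right-hand side by `m = i + j`, the term of `(i, m)` is `q^m q^C(m-i,2) [m, i]`.
Since `∏_{i=1}^n (1+q^i) = 1 + ∑_{m=1}^n q^m ∏_{i=1}^{m-1} (1+q^i)`, it suffices that
`∑_{i odd} q^C(m-i,2) [m, i] = ∏_{i=1}^{m-1} (1+q^i)` for `m ≥ 1`. This parity sum is half
the difference of the q-binomial theorem `∑_k c^k q^C(m-k,2) [m, k] = ∏_{i<m} (c + q^i)` at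
`c = 1` and `c = -1`, and in this form the q-binomial theorem follows by induction directly
from the recurrence defining `qbinom`.
-/

open Finset

lemma add_one_choose_two (d : ℕ) : (d + 1).choose 2 = d.choose 2 + d := by
  rw [Nat.choose_succ_succ', Nat.choose_one_right, add_comm]

lemma qbinom_zero_right (a : ℕ) : qbinom a 0 = 1 := by cases a <;> rfl

lemma qbinom_succ_succ (a b : ℕ) :
    qbinom (a + 1) (b + 1) = qbinom a b + X ^ (b + 1) * qbinom a (b + 1) := rfl

lemma qbinom_eq_zero_of_lt : ∀ {a b : ℕ}, a < b → qbinom a b = 0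
  | 0, _ + 1, _ => rfl
  | a + 1, b + 1, h => by
      rw [qbinom_succ_succ, qbinom_eq_zero_of_lt (by omega : a < b),
        qbinom_eq_zero_of_lt (by omega : a < b + 1), mul_zero, add_zero]

lemma X_pow_choose_mul_X_pow_mul_qbinom (m k : ℕ) :
    X ^ (m - k).choose 2 * X ^ (k + 1) * qbinom m (k + 1)
      = X ^ m * X ^ (m - (k + 1)).choose 2 * qbinom m (k + 1) := by
  rcases lt_or_ge k m with hk | hk
  · have hexp : (m - k).choose 2 + (k + 1) = m + (m - (k + 1)).choose 2 := by
      obtain ⟨d, rfl⟩ := Nat.exists_eq_add_of_lt hk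
      rw [show k + d + 1 - k = d + 1 by omega, show k + d + 1 - (k + 1) = d by omega,
        add_one_choose_two]
      omega
    rw [← pow_add, hexp, pow_add]
  · simp [qbinom_eq_zero_of_lt (Nat.lt_succ_of_le hk)]

theorem sum_pow_mul_X_pow_choose_mul_qbinom (c : Polynomial ℤ) (m : ℕ) :
    ∑ k ∈ range (m + 1), c ^ k * X ^ (m - k).choose 2 * qbinom m k
      = ∏ i ∈ range m, (c + X ^ i) := by
  induction m with
  | zero => simp [qbinom_zero_right]
  | succ m ih =>
    have hshift : ∑ k ∈ range (m + 1), c ^ (k + 1) * X ^ (m - (k + 1)).choose 2 * qbinom m (k + 1)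
        = ∑ k ∈ range (m + 1), c ^ k * X ^ (m - k).choose 2 * qbinom m k - X ^ m.choose 2 := by
      have h := sum_range_succ' (fun k => c ^ k * X ^ (m - k).choose 2 * qbinom m k) (m + 1)
      rw [sum_range_succ, qbinom_eq_zero_of_lt (Nat.lt_succ_self m), qbinom_zero_right,
        Nat.sub_zero] at h
      linear_combination -h
    calc ∑ k ∈ range (m + 1 + 1), c ^ k * X ^ (m + 1 - k).choose 2 * qbinom (m + 1) k
        = X ^ (m + 1).choose 2
          + ∑ k ∈ range (m + 1), (c * (c ^ k * X ^ (m - k).choose 2 * qbinom m k)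
            + X ^ m * (c ^ (k + 1) * X ^ (m - (k + 1)).choose 2 * qbinom m (k + 1))) := by
          rw [sum_range_succ', qbinom_zero_right, Nat.sub_zero, add_comm]
          congr 1
          · ring
          refine sum_congr rfl fun k _ => ?_
          rw [qbinom_succ_succ, Nat.add_sub_add_right]
          linear_combination c ^ (k + 1) * X_pow_choose_mul_X_pow_mul_qbinom m k
      _ = (∑ k ∈ range (m + 1), c ^ k * X ^ (m - k).choose 2 * qbinom m k) * (c + X ^ m) := by
          rw [sum_add_distrib, ← mul_sum, ← mul_sum, hshift, add_one_choose_two]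
          ring
      _ = ∏ i ∈ range (m + 1), (c + X ^ i) := by rw [ih, prod_range_succ]

lemma sum_sub_sum_neg_one_pow_mul {R : Type*} [CommRing R] (s : Finset ℕ) (a : ℕ → R) :
    ∑ k ∈ s, a k - ∑ k ∈ s, (-1) ^ k * a k = 2 * ∑ k ∈ s with Odd k, a k := by
  rw [← sum_sub_distrib, mul_sum, sum_filter]
  refine sum_congr rfl fun k _ => ?_
  split_ifs with hk
  · rw [hk.neg_one_pow]; ring
  · rw [(Nat.not_odd_iff_even.mp hk).neg_one_pow]; ring

theorem sum_odd_X_pow_choose_mul_qbinom (n : ℕ) :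
    ∑ i ∈ range (n + 2) with Odd i, X ^ (n + 1 - i).choose 2 * qbinom (n + 1) i
      = ∏ i ∈ Icc 1 n, (1 + X ^ i) := by
  have hplus := sum_pow_mul_X_pow_choose_mul_qbinom 1 (n + 1)
  have hminus := sum_pow_mul_X_pow_choose_mul_qbinom (-1) (n + 1)
  have hsplit := sum_sub_sum_neg_one_pow_mul (range (n + 2))
    (fun i => X ^ (n + 1 - i).choose 2 * qbinom (n + 1) i)
  rw [prod_range_eq_mul_Ico _ (by omega : 0 < n + 1), Ico_add_one_right_eq_Icc] at hplus hminus
  simp only [one_pow, one_mul] at hplus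
  simp only [mul_assoc] at hminus
  refine mul_left_cancel₀ two_ne_zero ?_
  linear_combination hplus - hminus - hsplit

theorem X_pow_mul_prod_Icc_one_add_X_pow (n : ℕ) :
    X ^ (n + 1) * ∏ i ∈ Icc 1 n, (1 + X ^ i)
      = ∑ i ∈ Icc 1 (n + 1) with Odd i,
          X ^ i * (X ^ (n + 1 - i + 1).choose 2 * qbinom (n + 1) i) := by
  have hodd : {i ∈ range (n + 2) | Odd i} = {i ∈ Icc 1 (n + 1) | Odd i} := by
    ext i
    simp only [mem_filter, mem_range, mem_Icc, Nat.odd_iff]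
    omega
  rw [← sum_odd_X_pow_choose_mul_qbinom, mul_sum, hodd]
  refine sum_congr rfl fun i hi => ?_
  have hexp : n + 1 + (n + 1 - i).choose 2 = i + (n + 1 - i + 1).choose 2 := by
    rw [add_one_choose_two]
    simp only [mem_filter, mem_Icc] at hi
    omega
  rw [← mul_assoc, ← mul_assoc, ← pow_add, ← pow_add, hexp]

lemma prod_Icc_one_add {R : Type*} [CommRing R] (f : ℕ → R) (n : ℕ) :
    ∏ i ∈ Icc 1 n, (1 + f i) = 1 + ∑ m ∈ Icc 1 n, f m * ∏ i ∈ Icc 1 (m - 1), (1 + f i) := by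
  induction n with
  | zero => simp
  | succ n ih =>
    rw [prod_Icc_succ_top (by omega), sum_Icc_succ_top (by omega), Nat.add_sub_cancel]
    linear_combination ih

lemma sum_filter_Icc_sum_range_eq_sum_Icc_sum_filter {M : Type*} [AddCommMonoid M]
    (p : ℕ → Prop) [DecidablePred p] (g : ℕ → ℕ → M) (n : ℕ) :
    ∑ i ∈ Icc 1 n with p i, ∑ j ∈ range (n - i + 1), g i (i + j)
      = ∑ m ∈ Icc 1 n, ∑ i ∈ Icc 1 m with p i, g i m := by
  calc _ = ∑ i ∈ Icc 1 n with p i, ∑ m ∈ Icc i n, g i m := by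
        refine sum_congr rfl fun i hi => ?_
        rw [← Ico_add_one_right_eq_Icc, sum_Ico_eq_sum_range]
        simp only [mem_filter, mem_Icc] at hi
        rw [Nat.sub_add_comm hi.1.2]
    _ = _ := sum_comm' fun i m => by
        simp only [mem_filter, mem_Icc]
        constructor <;> rintro ⟨⟨⟨h1, h2⟩, hp⟩, h3, h4⟩ <;>
          exact ⟨⟨⟨by omega, by omega⟩, hp⟩, by omega, by omega⟩

/-- `∏_{i=1}^{n} (1+q^i) = 1 + ∑_{i odd, 1 ≤ i ≤ n} q^i ∑_{j=0}^{n-i} q^{C(j+1,2)} qbinom(i+j, i)`. -/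
theorem lagrangian_hilbert_identity (n : ℕ) :
    ∏ i ∈ Finset.Icc 1 n, (1 + (X : Polynomial ℤ) ^ i)
      = 1 + ∑ i ∈ (Finset.Icc 1 n).filter (fun i => Odd i),
          X ^ i * ∑ j ∈ Finset.range (n - i + 1),
            X ^ (Nat.choose (j + 1) 2) * qbinom (i + j) i := by
  have hswap := sum_filter_Icc_sum_range_eq_sum_Icc_sum_filter Odd
    (fun i m => X ^ i * (X ^ (m - i + 1).choose 2 * qbinom m i)) n
  simp only [Nat.add_sub_cancel_left] at hswap
  simp only [mul_sum]
  rw [hswap, prod_Icc_one_add]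
  refine congrArg (1 + ·) (sum_congr rfl fun m hm => ?_)
  obtain ⟨k, rfl⟩ := Nat.exists_eq_add_one.2 (mem_Icc.1 hm).1
  exact X_pow_mul_prod_Icc_one_add_X_pow k
end

section
/- For integers 1 ≤ i ≤ min(k, ℓ), partitions λ contained in the ℓ × k rectangle that are i-vacant are in weight-preserving bijection with triples (j, μ, ν) where 0 ≤ j ≤ ℓ - i, μ is a partition inside the i × (k-i) rectangle, and ν is a partition inside the j × (i-1) rectangle; under the bijection |λ| = i + j(k-i+1) + |μ| + |ν|. -/
open scoped Classical

/-- A partition inside the `ℓ × k` rectangle, encoded as a weakly decreasing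
function `Fin ℓ → Fin (k+1)`. -/
def RectPartition (ℓ k : ℕ) (f : Fin ℓ → Fin (k + 1)) : Prop :=
  ∀ a b : Fin ℓ, a ≤ b → f b ≤ f a

/-- The number of nonzero parts of `f`. -/
noncomputable def plen {ℓ k : ℕ} (f : Fin ℓ → Fin (k + 1)) : ℕ :=
  (Finset.univ.filter (fun a => 0 < (f a : ℕ))).card

/-- The complement of `f` in the rectangle `(k^{plen f})` contains an
`m × (m-1)` rectangle in its southeast corner. -/
def ContainsSE {ℓ k : ℕ} (f : Fin ℓ → Fin (k + 1)) (m : ℕ) : Prop :=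
  m ≤ plen f ∧ ∀ a : Fin ℓ, (a : ℕ) < plen f → plen f ≤ (a : ℕ) + m → (f a : ℕ) + m ≤ k + 1

/-- `f` is `i`-vacant. -/
def IsVacant {ℓ k : ℕ} (i : ℕ) (f : Fin ℓ → Fin (k + 1)) : Prop :=
  ContainsSE f i ∧ ¬ ContainsSE f (i + 1)

section Aux

lemma plen_le {ℓ k : ℕ} (f : Fin ℓ → Fin (k + 1)) : plen f ≤ ℓ := by
  classical
  calc plen f ≤ Finset.univ.card := Finset.card_filter_le _ _
  _ = ℓ := by simp

lemma card_filter_val_lt {ℓ : ℕ} (m : ℕ) (hm : m ≤ ℓ) :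
    ((Finset.univ : Finset (Fin ℓ)).filter fun a : Fin ℓ => (a : ℕ) < m).card = m := by
  classical
  have : ((Finset.univ : Finset (Fin ℓ)).filter fun a : Fin ℓ => (a : ℕ) < m)
      = Finset.map (Fin.castLEEmb hm) Finset.univ := by
    ext a
    simp only [Finset.mem_filter, Finset.mem_univ, true_and, Finset.mem_map]
    constructor
    · intro h
      exact ⟨⟨(a : ℕ), h⟩, by ext; simp⟩
    · rintro ⟨t, rfl⟩
      simp
  rw [this, Finset.card_map, Finset.card_univ, Fintype.card_fin]

lemma lt_plen_iff {ℓ k : ℕ} {f : Fin ℓ → Fin (k + 1)} (hf : RectPartition ℓ k f)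
    (a : Fin ℓ) : (a : ℕ) < plen f ↔ 0 < (f a : ℕ) := by
  classical
  constructor
  · intro h
    by_contra h0
    have hz : (f a : ℕ) = 0 := by omega
    have hsub : (Finset.univ.filter (fun b => 0 < (f b : ℕ))) ⊆ Finset.Iio a := by
      intro b hb
      simp only [Finset.mem_filter] at hb
      simp only [Finset.mem_Iio]
      by_contra hba
      have : a ≤ b := le_of_not_gt hba
      have := hf a b this
      omega
    have := Finset.card_le_card hsub
    rw [Fin.card_Iio] at this
    exact absurd h (by unfold plen; omega)
  · intro h
    have hsub : Finset.Iic a ⊆ Finset.univ.filter (fun b => 0 < (f b : ℕ)) := by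
      intro b hb
      simp only [Finset.mem_Iic] at hb
      simp only [Finset.mem_filter, Finset.mem_univ, true_and]
      have := hf b a hb
      omega
    have := Finset.card_le_card hsub
    rw [Fin.card_Iic] at this
    unfold plen
    omega

end Aux

def gNat (k i j : ℕ) (μ : Fin i → Fin (k - i + 1)) (ν : Fin j → Fin i) (a : ℕ) : ℕ :=
  if h : a < j then (ν ⟨a, h⟩ : ℕ) + (k - i + 1)
  else if h2 : a < j + i then (μ ⟨a - j, by omega⟩ : ℕ) + 1
  else 0

lemma gNat_lt {k i j : ℕ} (h1 : 1 ≤ i) (hk : i ≤ k)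
    (μ : Fin i → Fin (k - i + 1)) (ν : Fin j → Fin i) (a : ℕ) :
    gNat k i j μ ν a < k + 1 := by
  unfold gNat
  split_ifs with h h2
  · have := (ν ⟨a, h⟩).2; omega
  · have := (μ ⟨a - j, by omega⟩).2; omega
  · omega

lemma gNat_antitone {k i j : ℕ} {μ : Fin i → Fin (k - i + 1)} {ν : Fin j → Fin i}
    (hμ : ∀ a b : Fin i, a ≤ b → μ b ≤ μ a) (hν : ∀ a b : Fin j, a ≤ b → ν b ≤ ν a)
    {a b : ℕ} (hab : a ≤ b) : gNat k i j μ ν b ≤ gNat k i j μ ν a := by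
  unfold gNat
  rcases lt_or_ge b j with hb | hb
  · have ha : a < j := by omega
    rw [dif_pos hb, dif_pos ha]
    have : (ν ⟨b, hb⟩ : ℕ) ≤ ν ⟨a, ha⟩ := hν _ _ hab
    omega
  · rw [dif_neg (by omega : ¬ b < j)]
    by_cases hb2 : b < j + i
    · rw [dif_pos hb2]
      by_cases ha : a < j
      · rw [dif_pos ha]
        have h1 := (μ ⟨b - j, by omega⟩).2
        omega
      · rw [dif_neg ha, dif_pos (by omega : a < j + i)]
        have : (μ ⟨b - j, by omega⟩ : ℕ) ≤ μ ⟨a - j, by omega⟩ :=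
          hμ ⟨a - j, by omega⟩ ⟨b - j, by omega⟩ (by simp [Fin.le_def]; omega)
        omega
    · rw [dif_neg hb2]
      exact Nat.zero_le _

lemma gNat_pos_iff {k i j : ℕ} (μ : Fin i → Fin (k - i + 1)) (ν : Fin j → Fin i) (a : ℕ) :
    0 < gNat k i j μ ν a ↔ a < j + i := by
  unfold gNat
  split_ifs with h h2 <;> omega

lemma gNat_low {k i j : ℕ} (μ : Fin i → Fin (k - i + 1)) (ν : Fin j → Fin i) {a : ℕ}
    (h : a < j) : gNat k i j μ ν a = (ν ⟨a, h⟩ : ℕ) + (k - i + 1) := by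
  unfold gNat; rw [dif_pos h]

lemma gNat_mid {k i j : ℕ} (μ : Fin i → Fin (k - i + 1)) (ν : Fin j → Fin i) {a : ℕ}
    (h : ¬ a < j) (h2 : a < j + i) :
    gNat k i j μ ν a = (μ ⟨a - j, by omega⟩ : ℕ) + 1 := by
  unfold gNat; rw [dif_neg h, dif_pos h2]

lemma gNat_hi {k i j : ℕ} (μ : Fin i → Fin (k - i + 1)) (ν : Fin j → Fin i) {a : ℕ}
    (h : ¬ a < j + i) : gNat k i j μ ν a = 0 := by
  unfold gNat; rw [dif_neg (by omega : ¬ a < j), dif_neg h]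

section Facts
variable {ℓ k i : ℕ} {f : Fin ℓ → Fin (k + 1)}

lemma fact_zero (hf : RectPartition ℓ k f) (a : Fin ℓ) (ha : plen f ≤ (a : ℕ)) :
    (f a : ℕ) = 0 := by
  have := (lt_plen_iff hf a).2
  by_contra h
  have : (a : ℕ) < plen f := (lt_plen_iff hf a).2 (by omega)
  omega

lemma fact_pos (hf : RectPartition ℓ k f) (a : Fin ℓ) (ha : (a : ℕ) < plen f) :
    1 ≤ (f a : ℕ) := (lt_plen_iff hf a).1 ha

lemma fact_low (hv : IsVacant i f) (a : Fin ℓ)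
    (ha1 : plen f - i ≤ (a : ℕ)) (ha2 : (a : ℕ) < plen f) : (f a : ℕ) ≤ k - i + 1 := by
  have hip : i ≤ plen f := hv.1.1
  have := hv.1.2 a ha2 (by omega)
  omega

lemma fact_high (hk : i ≤ k) (hf : RectPartition ℓ k f) (hv : IsVacant i f) (a : Fin ℓ)
    (ha : (a : ℕ) < plen f - i) : k - i + 1 ≤ (f a : ℕ) := by
  have hip : i ≤ plen f := hv.1.1
  have hnc := hv.2
  rw [ContainsSE] at hnc
  push_neg at hnc
  obtain ⟨b, hb1, hb2, hb3⟩ := hnc (by omega)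
  have hab : a ≤ b := by
    rw [Fin.le_def]; omega
  have := hf a b hab
  rw [Fin.le_def] at this
  omega

end Facts

section Maps
variable {k ℓ i : ℕ}

def bwdFun (h1 : 1 ≤ i) (hk : i ≤ k) (j : ℕ) (μ : Fin i → Fin (k - i + 1))
    (ν : Fin j → Fin i) : Fin ℓ → Fin (k + 1) :=
  fun a => ⟨gNat k i j μ ν (a : ℕ), gNat_lt h1 hk μ ν (a : ℕ)⟩

lemma bwdFun_rect (h1 : 1 ≤ i) (hk : i ≤ k) {j : ℕ} {μ : Fin i → Fin (k - i + 1)}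
    {ν : Fin j → Fin i} (hμ : ∀ a b : Fin i, a ≤ b → μ b ≤ μ a)
    (hν : ∀ a b : Fin j, a ≤ b → ν b ≤ ν a) :
    RectPartition ℓ k (bwdFun h1 hk j μ ν) := by
  intro a b hab
  rw [Fin.le_def] at hab ⊢
  exact gNat_antitone hμ hν hab

lemma plen_bwdFun (h1 : 1 ≤ i) (hk : i ≤ k) {j : ℕ} (μ : Fin i → Fin (k - i + 1))
    (ν : Fin j → Fin i) (hji : j + i ≤ ℓ) :
    plen (bwdFun h1 hk j μ ν : Fin ℓ → Fin (k + 1)) = j + i := by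
  classical
  unfold plen
  have : (Finset.univ.filter fun a : Fin ℓ => 0 < ((bwdFun h1 hk j μ ν : Fin ℓ → Fin (k+1)) a : ℕ))
      = Finset.univ.filter fun a : Fin ℓ => (a : ℕ) < j + i := by
    apply Finset.filter_congr
    intro a _
    simp [bwdFun, gNat_pos_iff]
  rw [this, card_filter_val_lt _ hji]

lemma bwdFun_vacant (h1 : 1 ≤ i) (hk : i ≤ k) {j : ℕ} (μ : Fin i → Fin (k - i + 1))
    (ν : Fin j → Fin i) (hji : j + i ≤ ℓ) :
    IsVacant i (bwdFun h1 hk j μ ν : Fin ℓ → Fin (k + 1)) := by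
  have hp := plen_bwdFun (ℓ := ℓ) h1 hk μ ν hji
  constructor
  · refine ⟨by omega, fun a ha1 ha2 => ?_⟩
    rw [hp] at ha1 ha2
    have hval : ((bwdFun h1 hk j μ ν : Fin ℓ → Fin (k+1)) a : ℕ)
        = (μ ⟨(a : ℕ) - j, by omega⟩ : ℕ) + 1 := by
      show gNat k i j μ ν (a : ℕ) = _
      unfold gNat
      rw [dif_neg (by omega : ¬ (a : ℕ) < j), dif_pos (by omega : (a : ℕ) < j + i)]
    have := (μ ⟨(a : ℕ) - j, by omega⟩).2
    omega
  · rintro ⟨hle, hall⟩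
    rw [hp] at hle hall
    have hj1 : 1 ≤ j := by omega
    have h := hall ⟨j - 1, by omega⟩ (by simp; omega) (by simp; omega)
    have hval : ((bwdFun h1 hk j μ ν : Fin ℓ → Fin (k+1)) ⟨j - 1, by omega⟩ : ℕ)
        = (ν ⟨j - 1, by omega⟩ : ℕ) + (k - i + 1) := by
      show gNat k i j μ ν (j - 1) = _
      unfold gNat
      rw [dif_pos (by omega : j - 1 < j)]
    rw [hval] at h
    omega

noncomputable def fwd (h1 : 1 ≤ i) (hk : i ≤ k)
    (f : {f : Fin ℓ → Fin (k + 1) // RectPartition ℓ k f ∧ IsVacant i f}) :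
    Σ j : Fin (ℓ - i + 1),
      {μ : Fin i → Fin (k - i + 1) // ∀ a b : Fin i, a ≤ b → μ b ≤ μ a} ×
      {ν : Fin (j : ℕ) → Fin i // ∀ a b : Fin (j : ℕ), a ≤ b → ν b ≤ ν a} :=
  have hp : plen f.1 ≤ ℓ := plen_le f.1
  have hip : i ≤ plen f.1 := f.2.2.1.1
  ⟨⟨plen f.1 - i, by omega⟩,
   ⟨fun t => ⟨(f.1 ⟨plen f.1 - i + (t : ℕ), by have := t.isLt; omega⟩ : ℕ) - 1, by
      have ht := t.isLt
      have := fact_low f.2.2 ⟨plen f.1 - i + (t : ℕ), by omega⟩ (by simp) (by simp; omega)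
      omega⟩, by
      intro a b hab
      rw [Fin.le_def] at hab ⊢
      have ha := a.isLt; have hb := b.isLt
      have := f.2.1 ⟨plen f.1 - i + (a : ℕ), by omega⟩ ⟨plen f.1 - i + (b : ℕ), by omega⟩
        (by rw [Fin.le_def]; simp; omega)
      rw [Fin.le_def] at this
      simp only
      omega⟩,
   ⟨fun s => ⟨(f.1 ⟨(s : ℕ), by have := s.isLt; simp at this; omega⟩ : ℕ) - (k - i + 1), by
      have hs : (s : ℕ) < plen f.1 - i := s.isLt
      have := (f.1 ⟨(s : ℕ), by omega⟩).isLt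
      have hk' := hk; have h1' := h1
      omega⟩, by
      intro a b hab
      rw [Fin.le_def] at hab ⊢
      have ha : (a : ℕ) < plen f.1 - i := a.isLt
      have hb : (b : ℕ) < plen f.1 - i := b.isLt
      have := f.2.1 ⟨(a : ℕ), by omega⟩ ⟨(b : ℕ), by omega⟩ (by rw [Fin.le_def]; exact hab)
      rw [Fin.le_def] at this
      simp only
      omega⟩⟩

end Maps

section Inv
variable {k ℓ i : ℕ}

noncomputable def bwd (h1 : 1 ≤ i) (hk : i ≤ k) (hl : i ≤ ℓ)
    (x : Σ j : Fin (ℓ - i + 1),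
      {μ : Fin i → Fin (k - i + 1) // ∀ a b : Fin i, a ≤ b → μ b ≤ μ a} ×
      {ν : Fin (j : ℕ) → Fin i // ∀ a b : Fin (j : ℕ), a ≤ b → ν b ≤ ν a}) :
    {f : Fin ℓ → Fin (k + 1) // RectPartition ℓ k f ∧ IsVacant i f} :=
  ⟨bwdFun h1 hk (x.1 : ℕ) x.2.1.1 x.2.2.1,
   bwdFun_rect h1 hk x.2.1.2 x.2.2.2,
   bwdFun_vacant h1 hk _ _ (by have := x.1.isLt; omega)⟩

lemma left_inv (h1 : 1 ≤ i) (hk : i ≤ k) (hl : i ≤ ℓ)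
    (f : {f : Fin ℓ → Fin (k + 1) // RectPartition ℓ k f ∧ IsVacant i f}) :
    bwd h1 hk hl (fwd h1 hk f) = f := by
  have hp : plen f.1 ≤ ℓ := plen_le f.1
  have hip : i ≤ plen f.1 := f.2.2.1.1
  apply Subtype.ext
  funext a
  apply Fin.ext
  show gNat k i ((fwd h1 hk f).1 : ℕ) (fwd h1 hk f).2.1.1 (fwd h1 hk f).2.2.1 (a : ℕ)
      = (f.1 a : ℕ)
  have hj : ((fwd h1 hk f).1 : ℕ) = plen f.1 - i := rfl
  unfold gNat
  by_cases h : (a : ℕ) < ((fwd h1 hk f).1 : ℕ)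
  · rw [dif_pos h]
    have : ((fwd h1 hk f).2.2.1 ⟨(a : ℕ), h⟩ : ℕ)
        = (f.1 ⟨(a : ℕ), a.isLt⟩ : ℕ) - (k - i + 1) := rfl
    rw [this, Fin.eta]
    have := fact_high hk f.2.1 f.2.2 a (by omega)
    omega
  · by_cases h2 : (a : ℕ) < ((fwd h1 hk f).1 : ℕ) + i
    · rw [dif_neg h, dif_pos h2]
      have : ((fwd h1 hk f).2.1.1 ⟨(a : ℕ) - ((fwd h1 hk f).1 : ℕ), by omega⟩ : ℕ)
          = (f.1 ⟨plen f.1 - i + ((a : ℕ) - (plen f.1 - i)), by omega⟩ : ℕ) - 1 := rfl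
      rw [this]
      have heq : (⟨plen f.1 - i + ((a : ℕ) - (plen f.1 - i)), by omega⟩ : Fin ℓ) = a :=
        Fin.ext (by simp; omega)
      rw [heq]
      have := fact_pos f.2.1 a (by omega)
      omega
    · rw [dif_neg h, dif_neg h2]
      exact (fact_zero f.2.1 a (by omega)).symm

lemma bwd_inj (h1 : 1 ≤ i) (hk : i ≤ k) (hl : i ≤ ℓ) :
    Function.Injective (bwd (ℓ := ℓ) h1 hk hl) := by
  rintro ⟨j, ⟨μ, hμ⟩, ⟨ν, hν⟩⟩ ⟨j', ⟨μ', hμ'⟩, ⟨ν', hν'⟩⟩ h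
  have hfun : bwdFun (ℓ := ℓ) h1 hk (j : ℕ) μ ν = bwdFun h1 hk (j' : ℕ) μ' ν' :=
    congrArg Subtype.val h
  have hv : ∀ a : ℕ, a < ℓ → gNat k i (j : ℕ) μ ν a = gNat k i (j' : ℕ) μ' ν' a :=
    fun a ha => congrArg Fin.val (congrFun hfun ⟨a, ha⟩)
  have hj1 : (j : ℕ) + i ≤ ℓ := by have := j.isLt; omega
  have hj2 : (j' : ℕ) + i ≤ ℓ := by have := j'.isLt; omega
  have hjj : j = j' := by
    have e1 := plen_bwdFun (ℓ := ℓ) h1 hk μ ν hj1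
    have e2 := plen_bwdFun (ℓ := ℓ) h1 hk μ' ν' hj2
    rw [hfun] at e1
    apply Fin.ext
    omega
  subst hjj
  have hμe : μ = μ' := by
    funext t
    have ha := hv ((j : ℕ) + (t : ℕ)) (by have := t.isLt; omega)
    rw [gNat_mid μ ν (by omega) (by have := t.isLt; omega),
        gNat_mid μ' ν' (by omega) (by have := t.isLt; omega)] at ha
    have ht : (⟨(j : ℕ) + (t : ℕ) - (j : ℕ), by have := t.isLt; omega⟩ : Fin i) = t :=
      Fin.ext (by simp)
    rw [ht] at ha
    exact Fin.ext (by omega)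
  have hνe : ν = ν' := by
    funext s
    have ha := hv (s : ℕ) (by have := s.isLt; omega)
    rw [gNat_low μ ν s.isLt, gNat_low μ' ν' s.isLt] at ha
    simp only [Fin.eta] at ha
    exact Fin.ext (by omega)
  subst hμe
  subst hνe
  rfl

end Inv

section Sum
variable {k ℓ i : ℕ}

lemma sum_gNat (h1 : 1 ≤ i) (hk : i ≤ k) {j : ℕ} (μ : Fin i → Fin (k - i + 1))
    (ν : Fin j → Fin i) (hji : j + i ≤ ℓ) :
    ∑ a : Fin ℓ, gNat k i j μ ν (a : ℕ)
      = i + j * (k - i + 1) + (∑ t, (μ t : ℕ)) + (∑ s, (ν s : ℕ)) := by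
  rw [Fin.sum_univ_eq_sum_range (fun a => gNat k i j μ ν a) ℓ]
  rw [← Finset.sum_range_add_sum_Ico _ (by omega : j + i ≤ ℓ)]
  rw [← Finset.sum_range_add_sum_Ico _ (by omega : j ≤ j + i)]
  have e3 : ∑ a ∈ Finset.Ico (j + i) ℓ, gNat k i j μ ν a = 0 := by
    apply Finset.sum_eq_zero
    intro a ha
    rw [Finset.mem_Ico] at ha
    exact gNat_hi μ ν (by omega)
  have e1 : ∑ a ∈ Finset.range j, gNat k i j μ ν a
      = (∑ s, (ν s : ℕ)) + j * (k - i + 1) := by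
    rw [← Fin.sum_univ_eq_sum_range (fun a => gNat k i j μ ν a) j]
    have : ∀ s : Fin j, gNat k i j μ ν (s : ℕ) = (ν s : ℕ) + (k - i + 1) := by
      intro s
      rw [gNat_low μ ν s.isLt, Fin.eta]
    rw [Finset.sum_congr rfl fun s _ => this s, Finset.sum_add_distrib]
    simp [mul_comm]
  have e2 : ∑ a ∈ Finset.Ico j (j + i), gNat k i j μ ν a = (∑ t, (μ t : ℕ)) + i := by
    rw [Finset.sum_Ico_eq_sum_range]
    simp only [Nat.add_sub_cancel_left]
    rw [← Fin.sum_univ_eq_sum_range (fun r => gNat k i j μ ν (j + r)) i]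
    have : ∀ t : Fin i, gNat k i j μ ν (j + (t : ℕ)) = (μ t : ℕ) + 1 := by
      intro t
      rw [gNat_mid μ ν (by omega) (by have := t.isLt; omega)]
      congr 1
      congr 1
      exact Fin.ext (by simp)
    rw [Finset.sum_congr rfl fun t _ => this t, Finset.sum_add_distrib]
    simp
  rw [e1, e2, e3]
  ring

end Sum

lemma sum_bwd {k ℓ i : ℕ} (h1 : 1 ≤ i) (hk : i ≤ k) (hl : i ≤ ℓ)
    (x : Σ j : Fin (ℓ - i + 1),
      {μ : Fin i → Fin (k - i + 1) // ∀ a b : Fin i, a ≤ b → μ b ≤ μ a} ×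
      {ν : Fin (j : ℕ) → Fin i // ∀ a b : Fin (j : ℕ), a ≤ b → ν b ≤ ν a}) :
    ∑ a : Fin ℓ, ((bwd h1 hk hl x).1 a : ℕ)
      = i + ((x.1 : ℕ)) * (k - i + 1) + (∑ t, (x.2.1.1 t : ℕ)) + ∑ s, (x.2.2.1 s : ℕ) := by
  have hcoe : ∀ a : Fin ℓ, ((bwd h1 hk hl x).1 a : ℕ)
      = gNat k i (x.1 : ℕ) x.2.1.1 x.2.2.1 (a : ℕ) := fun a => rfl
  simp only [hcoe]
  exact sum_gNat h1 hk _ _ (by have := x.1.isLt; omega)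


/-- For `1 ≤ i ≤ min(k,ℓ)`, the `i`-vacant partitions in the `ℓ × k` rectangle
are in weight-preserving bijection with triples `(j, μ, ν)` where `0 ≤ j ≤ ℓ-i`,
`μ` is a partition inside the `i × (k-i)` rectangle, and `ν` is a partition
inside the `j × (i-1)` rectangle; under the bijection
`|λ| = i + j(k-i+1) + |μ| + |ν|`. -/
theorem vacant_partition_bijection (k ℓ i : ℕ) (h1 : 1 ≤ i) (hk : i ≤ k) (hl : i ≤ ℓ) :
    ∃ e : {f : Fin ℓ → Fin (k + 1) // RectPartition ℓ k f ∧ IsVacant i f} ≃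
        (Σ j : Fin (ℓ - i + 1),
          {μ : Fin i → Fin (k - i + 1) // ∀ a b : Fin i, a ≤ b → μ b ≤ μ a} ×
          {ν : Fin (j : ℕ) → Fin i // ∀ a b : Fin (j : ℕ), a ≤ b → ν b ≤ ν a}),
      ∀ f, (∑ a, ((f : {f : Fin ℓ → Fin (k + 1) // RectPartition ℓ k f ∧ IsVacant i f}).val a : ℕ))
        = i + ((e f).1 : ℕ) * (k - i + 1)
            + (∑ a, ((e f).2.1.val a : ℕ)) + (∑ a, ((e f).2.2.val a : ℕ)) := by
  refine ⟨⟨fwd h1 hk, bwd h1 hk hl, left_inv h1 hk hl,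
    fun x => bwd_inj h1 hk hl (left_inv h1 hk hl (bwd h1 hk hl x))⟩, ?_⟩
  intro f
  show ∑ a, (f.1 a : ℕ) = i + ((fwd h1 hk f).1 : ℕ) * (k - i + 1)
      + (∑ t, ((fwd h1 hk f).2.1.1 t : ℕ)) + ∑ s, ((fwd h1 hk f).2.2.1 s : ℕ)
  conv_lhs => rw [← left_inv h1 hk hl f]
  exact sum_bwd h1 hk hl (fwd h1 hk f)
end

section
/- Strict partitions λ with λ_1 ≤ n are in weight-preserving bijection with triples (i, j, μ) where i is odd with 1 ≤ i ≤ n, 0 ≤ j ≤ n - i, and μ is a partition fitting inside the j × i rectangle; under this bijection |λ| = i + j(j+1)/2 + |μ|. (Nonempty strict partitions only; the empty partition corresponds to no triple.) -/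
/-!
Encode `λ` as the finset `S` of its parts and let `m = λ₁` be its maximum. The other parts, with a
part `0` adjoined exactly when `m - #S` is odd, form a set `T ⊆ {0, …, m - 1}` of size `j` with
`i = m - j` odd, and `S` is recovered from `T` by deleting `0` and adding `m` back. Subtracting the
staircase `(0, 1, …, j - 1)` from the increasing enumeration of `T` is the stars-and-bars bijection
between `j`-subsets of `{0, …, i + j - 1}` and monotone maps `Fin j → Fin (i + 1)`; reversing the
order turns these into partitions `μ` in the `j × i` box. The weights add up because
`|λ| = m + ΣT` and `ΣT = |μ| + j(j - 1)/2`.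
-/

open Finset

namespace Fin

variable {j : ℕ}

theorem apply_add_sub_le_of_strictMono {f : Fin j → ℕ} (hf : StrictMono f) {a b : Fin j}
    (hab : a ≤ b) : f a + (b - a : ℕ) ≤ f b := by
  have key : ∀ d (hd : a + d < j), f a + d ≤ f ⟨a + d, hd⟩ := by
    intro d
    induction d with
    | zero => simp
    | succ d ih =>
      intro hd
      have := hf (show (⟨a + d, by omega⟩ : Fin j) < ⟨a + (d + 1), hd⟩ by simp [Fin.lt_def])
      have := ih (by omega)
      omega
  have := key (b - a) (by omega)
  simpa only [Nat.add_sub_cancel' (Fin.le_def.mp hab)] using this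

theorem val_le_of_strictMono {f : Fin j → ℕ} (hf : StrictMono f) (b : Fin j) : (b : ℕ) ≤ f b := by
  have := apply_add_sub_le_of_strictMono hf (show ⟨0, b.pos⟩ ≤ b from Nat.zero_le _)
  dsimp only at this
  omega

theorem apply_add_le_of_strictMono {f : Fin j → ℕ} (hf : StrictMono f) {N : ℕ}
    (hN : ∀ b, f b < N) (b : Fin j) : f b + (j - b) ≤ N := by
  have hlast : j - 1 < j := Nat.sub_one_lt_of_lt b.2
  have := apply_add_sub_le_of_strictMono hf (show b ≤ ⟨j - 1, hlast⟩ from Nat.le_pred_of_lt b.2)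
  dsimp only at this
  have := hN ⟨j - 1, hlast⟩
  omega

theorem strictMono_val_add_val_of_monotone {m : ℕ} {ν : Fin j → Fin m} (hν : Monotone ν) :
    StrictMono fun b => (ν b : ℕ) + b :=
  fun _ _ hab => Nat.add_lt_add_of_le_of_lt (hν hab.le) hab

theorem monotone_sub_val_of_strictMono {f : Fin j → ℕ} (hf : StrictMono f) :
    Monotone fun b => f b - b := fun a b hab => by
  have := apply_add_sub_le_of_strictMono hf hab
  have : (a : ℕ) ≤ b := hab
  dsimp only
  omega

def antitoneEquivMonotone (α : Type*) [Preorder α] (j : ℕ) :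
    {μ : Fin j → α // Antitone μ} ≃ {ν : Fin j → α // Monotone ν} where
  toFun μ := ⟨μ.1 ∘ rev, μ.2.comp rev_anti⟩
  invFun ν := ⟨ν.1 ∘ rev, ν.2.comp_antitone rev_anti⟩
  left_inv μ := by ext; simp
  right_inv ν := by ext; simp

end Fin

section StarsAndBars

variable {i j : ℕ}

def monotoneEquivSubset (i j : ℕ) :
    {ν : Fin j → Fin (i + 1) // Monotone ν} ≃ {T : Finset ℕ // T ⊆ range (i + j) ∧ #T = j} where
  toFun ν := ⟨univ.image fun b => (ν.1 b : ℕ) + b, by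
    refine ⟨fun x hx => ?_, ?_⟩
    · obtain ⟨b, -, rfl⟩ := mem_image.mp hx
      have := (ν.1 b).is_lt
      have := b.is_lt
      rw [mem_range]
      omega
    · rw [card_image_of_injective _ (Fin.strictMono_val_add_val_of_monotone ν.2).injective,
        card_univ, Fintype.card_fin]⟩
  invFun T := ⟨fun b => ⟨T.1.orderEmbOfFin T.2.2 b - b, by
    have := Fin.apply_add_le_of_strictMono (T.1.orderEmbOfFin T.2.2).strictMono
      (fun b => mem_range.mp (T.2.1 (T.1.orderEmbOfFin_mem T.2.2 b))) b
    omega⟩,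
    fun _ _ hab => Fin.le_def.mpr
      (Fin.monotone_sub_val_of_strictMono (T.1.orderEmbOfFin T.2.2).strictMono hab)⟩
  left_inv ν := by
    ext b
    simp only
    rw [← orderEmbOfFin_unique _ (fun b => mem_image_of_mem _ (mem_univ b))
      (Fin.strictMono_val_add_val_of_monotone ν.2)]
    exact Nat.add_sub_cancel ..
  right_inv T := by
    ext1
    simp only
    conv_rhs => rw [← T.1.image_orderEmbOfFin_univ T.2.2]
    congr 1
    ext b
    have := Fin.val_le_of_strictMono (T.1.orderEmbOfFin T.2.2).strictMono b
    omega

theorem sum_monotoneEquivSubset (ν : {ν : Fin j → Fin (i + 1) // Monotone ν}) :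
    ∑ x ∈ (monotoneEquivSubset i j ν).1, x = ∑ b, (ν.1 b : ℕ) + j * (j - 1) / 2 := by
  change ∑ x ∈ univ.image _, x = _
  rw [sum_image (Fin.strictMono_val_add_val_of_monotone ν.2).injective.injOn, sum_add_distrib,
    Fin.sum_univ_eq_sum_range (fun b => b), sum_range_id]

def partitionEquivSubset (i j : ℕ) :
    {μ : Fin j → Fin (i + 1) // Antitone μ} ≃ {T : Finset ℕ // T ⊆ range (i + j) ∧ #T = j} :=
  (Fin.antitoneEquivMonotone _ j).trans (monotoneEquivSubset i j)

theorem sum_partitionEquivSubset (μ : {μ : Fin j → Fin (i + 1) // Antitone μ}) :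
    ∑ x ∈ (partitionEquivSubset i j μ).1, x = ∑ b, (μ.1 b : ℕ) + j * (j - 1) / 2 := by
  rw [partitionEquivSubset, Equiv.trans_apply, sum_monotoneEquivSubset]
  congr 1
  exact Equiv.sum_comp Fin.revPerm (fun b => (μ.1 b : ℕ))

end StarsAndBars

section AdjustParity

def adjustParity (m : ℕ) (X : Finset ℕ) : Finset ℕ := if Odd (m - #X) then X else insert 0 X

variable {m : ℕ} {X T : Finset ℕ}

theorem erase_zero_adjustParity (hX : 0 ∉ X) : (adjustParity m X).erase 0 = X := by
  unfold adjustParity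
  split_ifs
  · exact erase_eq_of_notMem hX
  · exact erase_insert hX

theorem odd_sub_card_adjustParity (hX : 0 ∉ X) (hm : #X < m) :
    Odd (m - #(adjustParity m X)) := by
  unfold adjustParity
  split_ifs with h
  · exact h
  · rwa [card_insert_of_notMem hX, ← not_not (a := Odd _), ← Nat.odd_add_one,
      show m - (#X + 1) + 1 = m - #X by omega]

theorem adjustParity_subset_range (hm : 0 < m) (hX : X ⊆ range m) :
    adjustParity m X ⊆ range m := by
  unfold adjustParity
  split_ifs
  · exact hX
  · exact insert_subset (mem_range.2 hm) hX

theorem sum_adjustParity : ∑ x ∈ adjustParity m X, x = ∑ x ∈ X, x := by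
  unfold adjustParity
  split_ifs
  · rfl
  · exact sum_insert_zero rfl

theorem adjustParity_erase_zero (hT : Odd (m - #T)) : adjustParity m (T.erase 0) = T := by
  unfold adjustParity
  by_cases h0 : 0 ∈ T
  · have hpos := hT.pos
    have hcard := card_erase_of_mem h0
    have hT1 : 1 ≤ #T := card_pos.2 ⟨0, h0⟩
    rw [if_neg, insert_erase h0]
    rwa [hcard, show m - (#T - 1) = m - #T + 1 by omega, Nat.odd_add_one, not_not]
  · rwa [erase_eq_of_notMem h0, if_pos]

end AdjustParity

namespace Finset

/-- The parts `λ₂ > ⋯ > λ_ℓ` of the partition `S`, with a part `0` adjoined when `λ₁ - ℓ` is odd;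
its size is the `j` of the bijection. -/
def lowerParts (S : Finset ℕ) (hS : S.Nonempty) : Finset ℕ :=
  adjustParity (S.max' hS) (S.erase (S.max' hS))

section Decomposition

variable {S : Finset ℕ} (hS : S.Nonempty)

theorem erase_max'_subset_range : S.erase (S.max' hS) ⊆ range (S.max' hS) := fun x hx =>
  mem_range.2 ((le_max' S x (mem_of_mem_erase hx)).lt_of_ne (ne_of_mem_erase hx))

theorem sum_eq_max'_add_sum_lowerParts :
    ∑ x ∈ S, x = S.max' hS + ∑ x ∈ S.lowerParts hS, x := by
  rw [lowerParts, sum_adjustParity]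
  exact (add_sum_erase S id (max'_mem S hS)).symm

variable (h0 : 0 ∉ S)
include h0

theorem max'_pos : 0 < S.max' hS :=
  Nat.pos_of_ne_zero fun h => h0 (h ▸ max'_mem S hS)

theorem zero_notMem_erase_max' : 0 ∉ S.erase (S.max' hS) :=
  fun h => h0 (mem_of_mem_erase h)

theorem card_erase_max'_lt : #(S.erase (S.max' hS)) < S.max' hS := by
  have := card_le_card (subset_erase.2
    ⟨erase_max'_subset_range hS, zero_notMem_erase_max' hS h0⟩)
  rw [card_erase_of_mem (mem_range.2 (max'_pos hS h0)), card_range] at this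
  have := max'_pos hS h0
  omega

theorem lowerParts_subset_range : S.lowerParts hS ⊆ range (S.max' hS) :=
  adjustParity_subset_range (max'_pos hS h0) (erase_max'_subset_range hS)

theorem card_lowerParts_le : #(S.lowerParts hS) ≤ S.max' hS := by
  simpa using card_le_card (lowerParts_subset_range hS h0)

theorem odd_max'_sub_card_lowerParts : Odd (S.max' hS - #(S.lowerParts hS)) :=
  odd_sub_card_adjustParity (zero_notMem_erase_max' hS h0) (card_erase_max'_lt hS h0)

theorem insert_max'_erase_zero_lowerParts :
    insert (S.max' hS) ((S.lowerParts hS).erase 0) = S := by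
  rw [lowerParts, erase_zero_adjustParity (zero_notMem_erase_max' hS h0),
    insert_erase (max'_mem S hS)]

end Decomposition

section Reconstruction

variable {m : ℕ} {T : Finset ℕ} (hT : T ⊆ range m)
include hT

theorem max'_insert_erase_zero : (insert m (T.erase 0)).max' (insert_nonempty _ _) = m :=
  (max'_eq_iff _ _ _).2 ⟨mem_insert_self _ _, forall_mem_insert _ _ _ |>.2
    ⟨le_rfl, fun _ hx => (mem_range.1 (hT (mem_of_mem_erase hx))).le⟩⟩

theorem lowerParts_insert_erase_zero (hodd : Odd (m - #T)) :
    (insert m (T.erase 0)).lowerParts (insert_nonempty _ _) = T := by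
  rw [lowerParts, max'_insert_erase_zero hT, erase_insert, adjustParity_erase_zero hodd]
  exact fun h => (mem_range.1 (hT (mem_of_mem_erase h))).ne rfl

end Reconstruction

end Finset

section NonemptySubsetEquiv

variable {n : ℕ}

theorem zero_notMem_val (S : {S : Finset ℕ // S.Nonempty ∧ ∀ x ∈ S, 1 ≤ x ∧ x ≤ n}) :
    0 ∉ S.1 :=
  fun h => (S.2.2 0 h).1.not_gt Nat.zero_lt_one

def nonemptySubsetEquiv (n : ℕ) :
    {S : Finset ℕ // S.Nonempty ∧ ∀ x ∈ S, 1 ≤ x ∧ x ≤ n} ≃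
      Σ p : {p : ℕ × ℕ // Odd p.1 ∧ 1 ≤ p.1 ∧ p.1 + p.2 ≤ n},
        {T : Finset ℕ // T ⊆ range (p.1.1 + p.1.2) ∧ #T = p.1.2} where
  toFun S :=
    have h0 := zero_notMem_val S
    have hodd := odd_max'_sub_card_lowerParts S.2.1 h0
    have hm : S.1.max' S.2.1 - #(S.1.lowerParts S.2.1) + #(S.1.lowerParts S.2.1) =
        S.1.max' S.2.1 :=
      Nat.sub_add_cancel (card_lowerParts_le S.2.1 h0)
    ⟨⟨(S.1.max' S.2.1 - #(S.1.lowerParts S.2.1), #(S.1.lowerParts S.2.1)), hodd, hodd.pos,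
        hm.trans_le (S.2.2 _ (max'_mem _ _)).2⟩,
      ⟨S.1.lowerParts S.2.1, by rw [hm]; exact lowerParts_subset_range S.2.1 h0, rfl⟩⟩
  invFun p := ⟨insert (p.1.1.1 + p.1.1.2) (p.2.1.erase 0), insert_nonempty _ _,
    forall_mem_insert _ _ _ |>.2 ⟨⟨p.1.2.2.1.trans (Nat.le_add_right _ _), p.1.2.2.2⟩,
      fun _ hx => ⟨Nat.pos_of_ne_zero (ne_of_mem_erase hx),
        (mem_range.1 (p.2.2.1 (mem_of_mem_erase hx))).le.trans p.1.2.2.2⟩⟩⟩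
  left_inv S := by
    ext1
    dsimp only
    rw [Nat.sub_add_cancel (card_lowerParts_le S.2.1 (zero_notMem_val S))]
    exact insert_max'_erase_zero_lowerParts S.2.1 (zero_notMem_val S)
  right_inv p := by
    obtain ⟨⟨⟨i, j⟩, hodd, -, -⟩, T, hT, hj⟩ := p
    dsimp only at hodd hT hj
    have hT' := lowerParts_insert_erase_zero hT (by rwa [hj, Nat.add_sub_cancel])
    refine Sigma.subtype_ext (Subtype.ext (Prod.ext ?_ ?_)) ?_ <;>
      simp only [hT', max'_insert_erase_zero hT, hj, Nat.add_sub_cancel]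

theorem sum_eq_add_sum_nonemptySubsetEquiv
    (S : {S : Finset ℕ // S.Nonempty ∧ ∀ x ∈ S, 1 ≤ x ∧ x ≤ n}) :
    ∑ x ∈ S.1, x = (nonemptySubsetEquiv n S).1.1.1 + (nonemptySubsetEquiv n S).1.1.2
      + ∑ x ∈ (nonemptySubsetEquiv n S).2.1, x := by
  dsimp only [nonemptySubsetEquiv, Equiv.coe_fn_mk]
  rw [Nat.sub_add_cancel (card_lowerParts_le S.2.1 (zero_notMem_val S))]
  exact sum_eq_max'_add_sum_lowerParts _

end NonemptySubsetEquiv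

theorem Nat.add_mul_sub_one_div_two (j : ℕ) : j + j * (j - 1) / 2 = j * (j + 1) / 2 := by
  have h := sum_range_succ (fun x => x) j
  rw [sum_range_id, sum_range_id, Nat.add_sub_cancel, mul_comm] at h
  omega

/-- Nonempty strict partitions `λ` with largest part at most `n` (encoded as
nonempty subsets of `{1, …, n}`) are in weight-preserving bijection with
triples `(i, j, μ)` where `i` is odd with `1 ≤ i ≤ n`, `0 ≤ j ≤ n - i`, and `μ`
is a partition inside the `j × i` rectangle; under the bijection
`|λ| = i + j(j+1)/2 + |μ|`. -/
theorem strict_partition_bijection (n : ℕ) :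
    ∃ e : {S : Finset ℕ // S.Nonempty ∧ ∀ x ∈ S, 1 ≤ x ∧ x ≤ n} ≃
        (Σ p : {p : ℕ × ℕ // Odd p.1 ∧ 1 ≤ p.1 ∧ p.1 + p.2 ≤ n},
          {μ : Fin p.val.2 → Fin (p.val.1 + 1) //
            ∀ a b : Fin p.val.2, a ≤ b → μ b ≤ μ a}),
      ∀ S, (S : {S : Finset ℕ // S.Nonempty ∧ ∀ x ∈ S, 1 ≤ x ∧ x ≤ n}).val.sum id
        = (e S).1.val.1 + (e S).1.val.2 * ((e S).1.val.2 + 1) / 2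
            + ∑ a, ((e S).2.val a : ℕ) := by
  refine ⟨(nonemptySubsetEquiv n).trans
    (Equiv.sigmaCongrRight fun p => (partitionEquivSubset p.1.1 p.1.2).symm), fun S => ?_⟩
  set q := nonemptySubsetEquiv n S
  have hS : ∑ x ∈ S.1, x = q.1.1.1 + q.1.1.2 + ∑ x ∈ q.2.1, x :=
    sum_eq_add_sum_nonemptySubsetEquiv S
  have hμ := sum_partitionEquivSubset ((partitionEquivSubset _ _).symm q.2)
  rw [Equiv.apply_symm_apply] at hμ
  change ∑ x ∈ S.1, x = q.1.1.1 + q.1.1.2 * (q.1.1.2 + 1) / 2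
    + ∑ a, (((partitionEquivSubset _ _).symm q.2).1 a : ℕ)
  rw [← Nat.add_mul_sub_one_div_two]
  omega
end

section
/- The map p sending a (k+1)-core κ to the partition whose i-th row length is the number of cells in row i of κ with hook length at most k is a bijection from (k+1)-cores to k-bounded partitions (partitions with all parts at most k). -/
/-- The hook length of the cell `(x, j)` (0-indexed, with `j < f x`) of the
partition with parts `f`. -/
noncomputable def hookLength (f : ℕ → ℕ) (x j : ℕ) : ℕ :=
  (f x - j) + Set.ncard {r | x < r ∧ j < f r}

/-- A partition, encoded as an antitone eventually-zero sequence of parts. -/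
def IsPartition (f : ℕ → ℕ) : Prop := Antitone f ∧ ∃ N, f N = 0

namespace CoreBij

open Set
open scoped Classical

def tail (f : ℕ → ℕ) : ℕ → ℕ := fun x => f (x + 1)

def cons (a : ℕ) (f : ℕ → ℕ) : ℕ → ℕ := fun x => match x with
  | 0 => a
  | x + 1 => f x

@[simp] lemma cons_zero (a : ℕ) (f : ℕ → ℕ) : cons a f 0 = a := rfl
@[simp] lemma cons_succ (a : ℕ) (f : ℕ → ℕ) (x : ℕ) : cons a f (x+1) = f x := rfl
@[simp] lemma tail_cons (a : ℕ) (f : ℕ → ℕ) : tail (cons a f) = f := rfl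
@[simp] lemma tail_apply (f : ℕ → ℕ) (x : ℕ) : tail f x = f (x+1) := rfl

lemma cons_tail (f : ℕ → ℕ) : cons (f 0) (tail f) = f := by
  funext x; cases x <;> rfl

lemma isPartition_tail {f : ℕ → ℕ} (hf : IsPartition f) : IsPartition (tail f) := by
  obtain ⟨ha, N, hN⟩ := hf
  exact ⟨fun i j hij => ha (by omega), N, ha (Nat.le_succ N) |>.trans hN.le |> Nat.le_zero.mp⟩

lemma isPartition_cons {μ : ℕ → ℕ} (hμ : IsPartition μ) {a : ℕ} (ha : μ 0 ≤ a) :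
    IsPartition (cons a μ) := by
  obtain ⟨hA, N, hN⟩ := hμ
  refine ⟨antitone_nat_of_succ_le fun n => ?_, N + 1, hN⟩
  cases n with
  | zero => simpa using ha
  | succ n => exact hA (Nat.le_succ n)

/-- number of rows of `μ` longer than `j`. -/
noncomputable def D (μ : ℕ → ℕ) (j : ℕ) : ℕ := Set.ncard {r | j < μ r}

noncomputable def g (μ : ℕ → ℕ) (j : ℕ) : ℤ := (D μ j : ℤ) - j

variable {μ : ℕ → ℕ}

lemma D_set_finite (hμ : IsPartition μ) (j : ℕ) : {r | j < μ r}.Finite := by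
  obtain ⟨hA, N, hN⟩ := hμ
  apply (Set.finite_Iio N).subset
  intro r hr
  simp only [mem_setOf_eq] at hr
  by_contra h
  simp only [mem_Iio, not_lt] at h
  have := (hA h).trans hN.le
  omega

lemma D_anti (hμ : IsPartition μ) : Antitone (D μ) := by
  apply antitone_nat_of_succ_le
  intro j
  exact Set.ncard_le_ncard (fun r hr => by simp only [mem_setOf_eq] at *; omega)
    (D_set_finite hμ j)

lemma D_eq_zero (hμ : IsPartition μ) {j : ℕ} (hj : μ 0 ≤ j) : D μ j = 0 := by
  have : {r | j < μ r} = ∅ := by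
    ext r; simp only [mem_setOf_eq, mem_empty_iff_false, iff_false, not_lt]
    exact (hμ.1 (Nat.zero_le r)).trans hj
  simp [D, this]

lemma g_strictAnti (hμ : IsPartition μ) : StrictAnti (g μ) := by
  apply strictAnti_nat_of_succ_lt
  intro j
  have := D_anti hμ (Nat.le_succ j)
  simp only [g, Nat.succ_eq_add_one] at *
  push_cast
  omega

lemma g_eq_neg (hμ : IsPartition μ) {j : ℕ} (hj : μ 0 ≤ j) : g μ j = -j := by
  simp [g, D_eq_zero hμ hj]

lemma neg_le_g (j : ℕ) : -(j:ℤ) ≤ g μ j := by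
  simp only [g]
  have : (0:ℤ) ≤ (D μ j : ℤ) := Int.natCast_nonneg _
  omega

lemma hook_succ (f : ℕ → ℕ) (x j : ℕ) :
    hookLength f (x+1) j = hookLength (tail f) x j := by
  unfold hookLength
  congr 1
  have h : {r | x + 1 < r ∧ j < f r} = (fun s => s + 1) '' {r | x < r ∧ j < tail f r} := by
    ext r
    simp only [mem_setOf_eq, mem_image, tail_apply]
    constructor
    · rintro ⟨h1, h2⟩
      exact ⟨r - 1, ⟨by omega, by rwa [Nat.sub_add_cancel (by omega)]⟩, by omega⟩
    · rintro ⟨s, ⟨hs1, hs2⟩, rfl⟩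
      exact ⟨by omega, hs2⟩
  rw [h, Set.ncard_image_of_injective _ (add_left_injective 1)]

/-- hook lengths of row 0, in terms of the tail. -/
lemma hook_zero (f : ℕ → ℕ) {j : ℕ} (hj : j < f 0) :
    (hookLength f 0 j : ℤ) = (f 0 : ℤ) - j + D (tail f) j := by
  unfold hookLength D
  have h : {r | 0 < r ∧ j < f r} = (fun s => s + 1) '' {r | j < tail f r} := by
    ext r
    simp only [mem_setOf_eq, mem_image, tail_apply]
    constructor
    · rintro ⟨h1, h2⟩
      exact ⟨r - 1, by rwa [Nat.sub_add_cancel (by omega)], by omega⟩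
    · rintro ⟨s, hs, rfl⟩
      exact ⟨by omega, hs⟩
  rw [h, Set.ncard_image_of_injective _ (add_left_injective 1)]
  push_cast [Nat.cast_sub hj.le]
  ring

lemma hook_cons_zero {μ : ℕ → ℕ} (a : ℕ) {j : ℕ} (hj : j < a) :
    (hookLength (cons a μ) 0 j : ℤ) = (a : ℤ) + g μ j := by
  rw [hook_zero (cons a μ) (by simpa using hj)]
  simp [g, cons_zero, tail_cons]
  ring

/-- `D μ j = D (tail μ) j + 1` when `j < μ 0`. -/
lemma D_eq_tail_succ {μ : ℕ → ℕ} (hμ : IsPartition μ) {j : ℕ} (hj : j < μ 0) :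
    D μ j = D (tail μ) j + 1 := by
  unfold D
  have h : {r | j < μ r} = (fun s => s + 1) '' {r | j < tail μ r} ∪ {0} := by
    ext r
    simp only [mem_setOf_eq, mem_union, mem_image, mem_singleton_iff, tail_apply]
    constructor
    · intro h2
      rcases Nat.eq_zero_or_pos r with rfl | hr
      · exact Or.inr rfl
      · exact Or.inl ⟨r - 1, by rwa [Nat.sub_add_cancel (by omega)], by omega⟩
    · rintro (⟨s, hs, rfl⟩ | rfl) <;> simpa
  rw [h, Set.ncard_union_eq (by simp) ?fin (Set.finite_singleton 0)]
  · rw [Set.ncard_image_of_injective _ (add_left_injective 1)]; simp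
  case fin =>
    exact (D_set_finite (isPartition_tail hμ) j).image _

/-- hook lengths of row 0 of `μ` itself. -/
lemma hook_zero' {μ : ℕ → ℕ} (hμ : IsPartition μ) {j : ℕ} (hj : j < μ 0) :
    (hookLength μ 0 j : ℤ) = (μ 0 : ℤ) - 1 + g μ j := by
  rw [hook_zero μ hj]
  have := D_eq_tail_succ hμ hj
  simp only [g]
  omega

variable (k : ℕ)

noncomputable def Nc (μ : ℕ → ℕ) (α : ℤ) : ℕ := Set.ncard {j : ℕ | (k:ℤ) + 1 - α ≤ g μ j}

noncomputable def psi (μ : ℕ → ℕ) (α : ℤ) : ℤ := α - Nc k μ α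

noncomputable def Fm (f : ℕ → ℕ) (i : ℕ) : ℕ :=
  Set.ncard {j | j < f i ∧ hookLength f i j ≤ k}

def Core (f : ℕ → ℕ) : Prop := ∀ x j, j < f x → hookLength f x j ≠ k + 1

variable {μ : ℕ → ℕ}

lemma g_set_finite (hμ : IsPartition μ) (c : ℤ) : {j : ℕ | c ≤ g μ j}.Finite := by
  apply (Set.finite_Iio (μ 0 + (-c).toNat + 1)).subset
  intro j hj
  simp only [mem_setOf_eq] at hj
  simp only [mem_Iio]
  by_contra h
  push_neg at h
  have h1 : μ 0 ≤ j := by omega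
  rw [g_eq_neg hμ h1] at hj
  have : (j : ℤ) ≤ -c := by omega
  have : (j : ℤ) ≤ ((-c).toNat : ℤ) := this.trans (Int.self_le_toNat _)
  omega

/-- the central counting lemma. -/
lemma count_formula (hμ : IsPartition μ) {c : ℕ} {α : ℤ} (hc : μ 0 ≤ c) (hα : α ≤ k + c) :
    ({j | j < c ∧ (α + g μ j ≤ k)}.ncard : ℤ) = c - Nc k μ α := by
  have hN : {j : ℕ | (k:ℤ) + 1 - α ≤ g μ j} = {j | j < c ∧ (k:ℤ) + 1 - α ≤ g μ j} := by
    ext j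
    simp only [mem_setOf_eq]
    refine ⟨fun h => ⟨?_, h⟩, fun h => h.2⟩
    by_contra hj
    push_neg at hj
    have h2 : g μ j ≤ g μ c := (g_strictAnti hμ).antitone hj
    rw [g_eq_neg hμ hc] at h2
    omega
  have hsplit : {j : ℕ | j < c} =
      {j | j < c ∧ (α + g μ j ≤ k)} ∪ {j | j < c ∧ (k:ℤ) + 1 - α ≤ g μ j} := by
    ext j
    simp only [mem_setOf_eq, mem_union]
    constructor
    · intro h
      rcases le_or_gt (α + g μ j) k with h1 | h1
      · exact Or.inl ⟨h, h1⟩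
      · exact Or.inr ⟨h, by omega⟩
    · rintro (h | h) <;> exact h.1
  have hfin : {j : ℕ | j < c}.Finite := Set.finite_Iio c
  have hcard : {j : ℕ | j < c}.ncard = c := by
    rw [show {j : ℕ | j < c} = ↑(Finset.range c) by ext j; simp, Set.ncard_coe_finset,
      Finset.card_range]
  have hdisj : Disjoint {j : ℕ | j < c ∧ (α + g μ j ≤ k)}
      {j : ℕ | j < c ∧ (k:ℤ) + 1 - α ≤ g μ j} := by
    rw [Set.disjoint_iff]
    rintro j ⟨⟨_, h1⟩, ⟨_, h2⟩⟩
    simp only [mem_empty_iff_false]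
    omega
  have h1fin : {j : ℕ | j < c ∧ (α + g μ j ≤ k)}.Finite :=
    hfin.subset (fun j hj => hj.1)
  have h2fin : {j : ℕ | j < c ∧ (k:ℤ) + 1 - α ≤ g μ j}.Finite :=
    hfin.subset (fun j hj => hj.1)
  have := Set.ncard_union_eq hdisj h1fin h2fin
  rw [← hsplit, hcard] at this
  unfold Nc
  rw [hN]
  omega

/-- `Fm` of an extended partition, row 0. -/
lemma Fm_cons_zero (hμ : IsPartition μ) {a : ℕ} (ha : μ 0 ≤ a) :
    (Fm k (cons a μ) 0 : ℤ) = psi k μ a := by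
  unfold Fm psi
  have hset : {j | j < cons a μ 0 ∧ hookLength (cons a μ) 0 j ≤ k} =
      {j | j < a ∧ ((a:ℤ) + g μ j ≤ k)} := by
    ext j
    simp only [cons_zero, mem_setOf_eq]
    constructor
    · rintro ⟨h1, h2⟩
      refine ⟨h1, ?_⟩
      rw [← hook_cons_zero a h1]
      exact_mod_cast h2
    · rintro ⟨h1, h2⟩
      refine ⟨h1, ?_⟩
      have := hook_cons_zero (μ := μ) a h1
      omega
  rw [hset]
  have := count_formula k hμ (c := a) (α := a) ha (by omega)
  omega

/-- `Fm` of `μ` itself at row 0. -/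
lemma Fm_zero (hμ : IsPartition μ) :
    (Fm k μ 0 : ℤ) = psi k μ ((μ 0 : ℤ) - 1) + 1 := by
  unfold Fm psi
  have hset : {j | j < μ 0 ∧ hookLength μ 0 j ≤ k} =
      {j | j < μ 0 ∧ (((μ 0 : ℤ) - 1) + g μ j ≤ k)} := by
    ext j
    simp only [mem_setOf_eq]
    constructor
    · rintro ⟨h1, h2⟩
      have := hook_zero' hμ h1
      exact ⟨h1, by omega⟩
    · rintro ⟨h1, h2⟩
      have := hook_zero' hμ h1
      refine ⟨h1, ?_⟩
      omega
  rw [hset]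
  have := count_formula k hμ (c := μ 0) (α := (μ 0 : ℤ) - 1) le_rfl (by omega)
  omega

lemma Fm_succ (f : ℕ → ℕ) (x : ℕ) : Fm k f (x+1) = Fm k (tail f) x := by
  unfold Fm
  congr 1
  ext j
  simp only [mem_setOf_eq, tail_apply, hook_succ]

lemma Nc_step (hμ : IsPartition μ) (α : ℤ) :
    (Nc k μ (α + 1) : ℤ) =
      Nc k μ α + (if (k:ℤ) - α ∈ Set.range (g μ) then 1 else 0) := by
  unfold Nc
  have hset : {j : ℕ | (k:ℤ) + 1 - (α+1) ≤ g μ j} =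
      {j : ℕ | (k:ℤ) + 1 - α ≤ g μ j} ∪ {j : ℕ | g μ j = (k:ℤ) - α} := by
    ext j
    simp only [mem_setOf_eq, mem_union]
    omega
  have hdisj : Disjoint {j : ℕ | (k:ℤ) + 1 - α ≤ g μ j} {j : ℕ | g μ j = (k:ℤ) - α} := by
    rw [Set.disjoint_iff]
    rintro j ⟨h1, h2⟩
    simp only [mem_setOf_eq] at *
    omega
  have hfin1 := g_set_finite hμ ((k:ℤ) + 1 - α)
  have hfin2 : {j : ℕ | g μ j = (k:ℤ) - α}.Finite :=
    (g_set_finite hμ ((k:ℤ) - α)).subset (fun j hj => hj.ge)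
  rw [hset, Set.ncard_union_eq hdisj hfin1 hfin2]
  have : {j : ℕ | g μ j = (k:ℤ) - α}.ncard = if (k:ℤ) - α ∈ Set.range (g μ) then 1 else 0 := by
    split
    · rename_i h
      obtain ⟨j0, hj0⟩ := h
      rw [show {j : ℕ | g μ j = (k:ℤ) - α} = {j0} from ?_, Set.ncard_singleton]
      ext j
      simp only [mem_setOf_eq, mem_singleton_iff]
      constructor
      · intro h
        exact (g_strictAnti hμ).injective (h.trans hj0.symm)
      · rintro rfl; exact hj0
    · rename_i h
      rw [show {j : ℕ | g μ j = (k:ℤ) - α} = ∅ from ?_, Set.ncard_empty]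
      ext j
      simp only [mem_setOf_eq, mem_empty_iff_false, iff_false]
      exact fun hj => h ⟨j, hj⟩
  rw [this]
  push_cast
  split <;> omega

lemma psi_step (hμ : IsPartition μ) (α : ℤ) :
    psi k μ (α + 1) = psi k μ α + (if (k:ℤ) - α ∈ Set.range (g μ) then 0 else 1) := by
  unfold psi
  have := Nc_step k hμ α
  split at this <;> split <;> first | omega | (rename_i h1 h2; exact absurd h2 h1)

lemma psi_mono (hμ : IsPartition μ) : Monotone (psi k μ) := by
  have h : ∀ α : ℤ, psi k μ α ≤ psi k μ (α + 1) := by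
    intro α
    rw [psi_step k hμ α]
    split <;> omega
  intro a b hab
  obtain ⟨n, rfl⟩ : ∃ n : ℕ, b = a + n := ⟨(b - a).toNat, by omega⟩
  clear hab
  induction n with
  | zero => simp
  | succ n ih =>
    calc psi k μ a ≤ psi k μ (a + n) := ih
    _ ≤ psi k μ (a + n + 1) := h _
    _ = psi k μ (a + (n+1)) := by ring_nf

lemma psi_step_of_valid (hμ : IsPartition μ) {α : ℤ}
    (h : (k:ℤ) + 1 - α ∉ Set.range (g μ)) :
    psi k μ α = psi k μ (α - 1) + 1 := by
  have := psi_step k hμ (α - 1)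
  rw [show α - 1 + 1 = α by ring] at this
  rw [this, if_neg (by rwa [show (k:ℤ) - (α-1) = (k:ℤ)+1-α by ring])]

lemma psi_top (hμ : IsPartition μ) {α : ℤ} (hα : (μ 0 : ℤ) + k ≤ α) :
    psi k μ α = k := by
  unfold psi Nc
  have hset : {j : ℕ | (k:ℤ) + 1 - α ≤ g μ j} = {j : ℕ | (j:ℤ) ≤ α - k - 1} := by
    ext j
    simp only [mem_setOf_eq]
    constructor
    · intro h
      rcases lt_or_ge j (μ 0) with hj | hj
      · omega
      · rw [g_eq_neg hμ hj] at h; omega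
    · intro h
      have := neg_le_g (μ := μ) j
      omega
  rw [hset]
  have hcard : {j : ℕ | (j:ℤ) ≤ α - k - 1} = ↑(Finset.range (α - k).toNat) := by
    ext j
    simp only [Finset.coe_range, mem_Iio, mem_setOf_eq]
    omega
  rw [hcard, Set.ncard_coe_finset, Finset.card_range]
  omega

lemma mem_range_top (hμ : IsPartition μ) {α : ℤ} (hα : (μ 0 : ℤ) + k + 1 ≤ α) :
    (k:ℤ) + 1 - α ∈ Set.range (g μ) := by
  refine ⟨(α - k - 1).toNat, ?_⟩
  have h1 : ((α - k - 1).toNat : ℤ) = α - k - 1 := Int.toNat_of_nonneg (by omega)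
  rw [g_eq_neg hμ (by omega)]
  omega

lemma psi_le_k (hμ : IsPartition μ) (α : ℤ) : psi k μ α ≤ k := by
  rcases le_or_gt α ((μ 0 : ℤ) + k) with h | h
  · exact (psi_mono k hμ h).trans (psi_top k hμ le_rfl).le
  · exact (psi_top k hμ (by omega)).le

lemma core_tail {f : ℕ → ℕ} (hf : Core k f) : Core k (tail f) := by
  intro x j hj
  rw [← hook_succ]
  exact hf (x+1) j hj

lemma core_cons_valid (hμ : IsPartition μ) {a : ℕ} (ha : μ 0 ≤ a)
    (hc : Core k (cons a μ)) : (k:ℤ) + 1 - a ∉ Set.range (g μ) := by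
  rintro ⟨j, hj⟩
  have hja : j < a := by
    by_contra h
    push_neg at h
    rw [g_eq_neg hμ (ha.trans h)] at hj
    omega
  have := hook_cons_zero (μ := μ) a hja
  have heq : (hookLength (cons a μ) 0 j : ℤ) = (k:ℤ) + 1 := by omega
  exact hc 0 j (by simpa using hja) (by exact_mod_cast heq)

lemma core_cons (hμ : IsPartition μ) {a : ℕ} (ha : μ 0 ≤ a)
    (hcμ : Core k μ) (hv : (k:ℤ) + 1 - a ∉ Set.range (g μ)) :
    Core k (cons a μ) := by
  intro x j hj
  cases x with
  | zero =>
    simp only [cons_zero] at hj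
    intro heq
    apply hv
    refine ⟨j, ?_⟩
    have := hook_cons_zero (μ := μ) a hj
    rw [heq] at this
    push_cast at this
    omega
  | succ x =>
    rw [hook_succ, tail_cons]
    exact hcμ x j (by simpa using hj)

/-- uniqueness of the extension. -/
lemma ext_unique (hμ : IsPartition μ) {a a' : ℕ} (ha : μ 0 ≤ a) (ha' : μ 0 ≤ a')
    (hv : (k:ℤ) + 1 - a ∉ Set.range (g μ)) (hv' : (k:ℤ) + 1 - a' ∉ Set.range (g μ))
    (h : psi k μ a = psi k μ a') : a = a' := by
  by_contra hne
  wlog hlt : a < a' generalizing a a'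
  · exact this ha' ha hv' hv h.symm (Ne.symm hne) (by omega)
  have h1 : psi k μ a' = psi k μ ((a':ℤ) - 1) + 1 := psi_step_of_valid k hμ hv'
  have h2 : psi k μ (a:ℤ) ≤ psi k μ ((a':ℤ) - 1) := psi_mono k hμ (by omega)
  omega

/-- existence of the extension. -/
lemma ext_exists (hμ : IsPartition μ) {m : ℕ}
    (hm1 : psi k μ ((μ 0 : ℤ) - 1) + 1 ≤ m) (hm2 : m ≤ k) :
    ∃ a : ℕ, μ 0 ≤ a ∧ (k:ℤ) + 1 - a ∉ Set.range (g μ) ∧ psi k μ a = m := by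
  have hQk : (m:ℤ) ≤ psi k μ ((μ 0 : ℕ) + k) := by
    rw [psi_top k hμ (by push_cast; omega)]
    exact_mod_cast hm2
  let Q : ℕ → Prop := fun n => (m:ℤ) ≤ psi k μ ((μ 0 : ℕ) + n)
  have hQ : ∃ n, Q n := ⟨k, hQk⟩
  let n0 := Nat.find hQ
  have hn0 : Q n0 := Nat.find_spec hQ
  set a : ℕ := μ 0 + n0 with ha_def
  have hprev : psi k μ ((a:ℤ) - 1) < m := by
    rcases Nat.eq_zero_or_pos n0 with hz | hpos
    · have : (a:ℤ) - 1 = (μ 0 : ℤ) - 1 := by simp [ha_def, hz]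
      rw [this]; omega
    · have hmin := Nat.find_min hQ (m := n0 - 1) (by omega)
      simp only [Q, not_le] at hmin
      have : (a:ℤ) - 1 = ((μ 0 : ℕ) + (n0 - 1) : ℕ) := by push_cast; omega
      rw [this]
      exact hmin
  have hstep := psi_step k hμ ((a:ℤ) - 1)
  rw [show (a:ℤ) - 1 + 1 = (a:ℤ) by ring] at hstep
  have hcur : (m:ℤ) ≤ psi k μ a := by exact_mod_cast hn0
  have hval : psi k μ a = m ∧ (k:ℤ) - ((a:ℤ)-1) ∉ Set.range (g μ) := by
    constructor
    · split at hstep <;> omega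
    · intro hmem
      rw [if_pos hmem] at hstep
      omega
  refine ⟨a, by omega, ?_, hval.1⟩
  rw [show (k:ℤ) + 1 - a = (k:ℤ) - ((a:ℤ)-1) by ring]
  exact hval.2

lemma Fm_zero_eq_psi {f : ℕ → ℕ} (hf : IsPartition f) :
    (Fm k f 0 : ℤ) = psi k (tail f) (f 0) := by
  conv_lhs => rw [← cons_tail f]
  exact Fm_cons_zero k (isPartition_tail hf) (hf.1 (Nat.zero_le 1))

lemma Fm_le_k {f : ℕ → ℕ} (hf : IsPartition f) (x : ℕ) : Fm k f x ≤ k := by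
  induction x generalizing f with
  | zero =>
    have h := Fm_zero_eq_psi k hf
    have := psi_le_k k (isPartition_tail hf) ((f 0 : ℤ))
    omega
  | succ x ih =>
    rw [Fm_succ]
    exact ih (isPartition_tail hf)

lemma Fm_anti_succ {f : ℕ → ℕ} (hf : IsPartition f) (hc : Core k f) (x : ℕ) :
    Fm k f (x+1) ≤ Fm k f x := by
  induction x generalizing f with
  | zero =>
    show Fm k f 1 ≤ Fm k f 0
    set μ := tail f with hμ_def
    have hμ : IsPartition μ := isPartition_tail hf
    have ha : μ 0 ≤ f 0 := hf.1 (Nat.zero_le 1)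
    have h0 : (Fm k f 0 : ℤ) = psi k μ (f 0) := Fm_zero_eq_psi k hf
    have h1 : (Fm k f 1 : ℤ) = psi k μ ((μ 0 : ℤ) - 1) + 1 := by
      rw [Fm_succ]
      exact Fm_zero k hμ
    have hv : (k:ℤ) + 1 - (f 0) ∉ Set.range (g μ) := by
      apply core_cons_valid k hμ ha
      rw [hμ_def, cons_tail]
      exact hc
    have hs : psi k μ (f 0) = psi k μ ((f 0 : ℤ) - 1) + 1 := psi_step_of_valid k hμ hv
    have hm : psi k μ ((μ 0 : ℤ) - 1) ≤ psi k μ ((f 0 : ℤ) - 1) := psi_mono k hμ (by omega)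
    omega
  | succ x ih =>
    rw [Fm_succ k f (x+1), Fm_succ k f x]
    exact ih (isPartition_tail hf) (core_tail k hc)

lemma Fm_eq_zero {f : ℕ → ℕ} {x : ℕ} (hx : f x = 0) : Fm k f x = 0 := by
  unfold Fm
  rw [show {j | j < f x ∧ hookLength f x j ≤ k} = ∅ by ext j; simp [hx]]
  simp

lemma isPartition_Fm {f : ℕ → ℕ} (hf : IsPartition f) (hc : Core k f) :
    IsPartition (Fm k f) := by
  obtain ⟨hA, N, hN⟩ := hf
  exact ⟨antitone_nat_of_succ_le (Fm_anti_succ k ⟨hA, N, hN⟩ hc), N, Fm_eq_zero k hN⟩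

lemma Fm_cons_succ (a : ℕ) (μ : ℕ → ℕ) (x : ℕ) : Fm k (cons a μ) (x+1) = Fm k μ x := by
  rw [Fm_succ, tail_cons]

/-- Injectivity, by induction on a bound for the number of rows. -/
lemma inj_aux (N : ℕ) : ∀ f f' : ℕ → ℕ, IsPartition f → IsPartition f' →
    Core k f → Core k f' → f N = 0 → f' N = 0 → Fm k f = Fm k f' → f = f' := by
  induction N with
  | zero =>
    intro f f' hf hf' _ _ h0 h0' _
    funext x
    have := hf.1 (Nat.zero_le x)
    have := hf'.1 (Nat.zero_le x)
    omega
  | succ N ih =>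
    intro f f' hf hf' hc hc' h0 h0' hFm
    have htail : tail f = tail f' := by
      apply ih (tail f) (tail f') (isPartition_tail hf) (isPartition_tail hf')
        (core_tail k hc) (core_tail k hc') h0 h0'
      funext x
      rw [← Fm_succ, ← Fm_succ, hFm]
    have hμ : IsPartition (tail f) := isPartition_tail hf
    have ha : tail f 0 ≤ f 0 := hf.1 (Nat.zero_le 1)
    have ha' : tail f 0 ≤ f' 0 := by
      rw [htail]; exact hf'.1 (Nat.zero_le 1)
    have hv : (k:ℤ) + 1 - (f 0) ∉ Set.range (g (tail f)) :=
      core_cons_valid k hμ ha (by rw [cons_tail]; exact hc)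
    have hv' : (k:ℤ) + 1 - (f' 0) ∉ Set.range (g (tail f)) := by
      rw [htail]
      exact core_cons_valid k (isPartition_tail hf') (hf'.1 (Nat.zero_le 1))
        (by rw [cons_tail]; exact hc')
    have hpsi : psi k (tail f) (f 0) = psi k (tail f) (f' 0) := by
      have e1 := Fm_zero_eq_psi k hf
      have e2 := Fm_zero_eq_psi k hf'
      rw [← htail] at e2
      rw [hFm] at e1
      omega
    have hz := ext_unique k hμ ha ha' hv hv' hpsi
    funext x
    cases x with
    | zero => exact hz
    | succ x => exact congrFun htail x

/-- Surjectivity, by induction on a bound for the number of rows. -/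
lemma surj_aux (N : ℕ) : ∀ lam : ℕ → ℕ, IsPartition lam → (∀ i, lam i ≤ k) → lam N = 0 →
    ∃ f : ℕ → ℕ, IsPartition f ∧ Core k f ∧ Fm k f = lam := by
  induction N with
  | zero =>
    intro lam hlam _ h0
    have hlz : lam = fun _ => 0 := by
      funext x
      have := hlam.1 (Nat.zero_le x)
      omega
    refine ⟨fun _ => 0, ⟨antitone_const, 0, rfl⟩, fun x j hj => absurd hj (by simp), ?_⟩
    funext x
    rw [hlz]
    exact Fm_eq_zero k rfl
  | succ N ih =>
    intro lam hlam hbd h0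
    obtain ⟨μ, hμ, hcμ, hFμ⟩ := ih (tail lam) (isPartition_tail hlam)
      (fun i => hbd (i+1)) h0
    have hm1 : psi k μ ((μ 0 : ℤ) - 1) + 1 ≤ (lam 0 : ℤ) := by
      have e := Fm_zero k hμ
      have : Fm k μ 0 = lam 1 := by rw [hFμ]; rfl
      have hle : lam 1 ≤ lam 0 := hlam.1 (Nat.zero_le 1)
      omega
    obtain ⟨a, ha, hv, hpsi⟩ := ext_exists k hμ hm1 (hbd 0)
    refine ⟨cons a μ, isPartition_cons hμ ha, core_cons k hμ ha hcμ hv, ?_⟩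
    funext x
    cases x with
    | zero =>
      have := Fm_cons_zero k hμ ha
      rw [hpsi] at this
      exact_mod_cast this
    | succ x =>
      rw [Fm_cons_succ, hFμ]
      rfl

end CoreBij

/-- The map `p`, sending a `(k+1)`-core `κ` to the partition whose `i`-th row
length is the number of cells in row `i` of `κ` with hook length at most `k`,
is a bijection from `(k+1)`-cores to `k`-bounded partitions. -/
theorem core_to_bounded_bijection (k : ℕ) (hk : 1 ≤ k) :
    ∃ e : {f : ℕ → ℕ // IsPartition f ∧ ∀ x j, j < f x → hookLength f x j ≠ k + 1} ≃
        {g : ℕ → ℕ // IsPartition g ∧ ∀ i, g i ≤ k},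
      ∀ κ i, ((e κ) : {g : ℕ → ℕ // IsPartition g ∧ ∀ i, g i ≤ k}).val i
        = Set.ncard {j | j < κ.val i ∧ hookLength κ.val i j ≤ k} := by
  classical
  set P := {f : ℕ → ℕ // IsPartition f ∧ ∀ x j, j < f x → hookLength f x j ≠ k + 1} with hP
  set B := {g : ℕ → ℕ // IsPartition g ∧ ∀ i, g i ≤ k} with hB
  have hFdef : ∀ κ : P, IsPartition (CoreBij.Fm k κ.val) ∧ ∀ i, CoreBij.Fm k κ.val i ≤ k :=
    fun κ => ⟨CoreBij.isPartition_Fm k κ.2.1 κ.2.2, CoreBij.Fm_le_k k κ.2.1⟩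
  let F : P → B := fun κ => ⟨CoreBij.Fm k κ.val, hFdef κ⟩
  have hinj : Function.Injective F := by
    rintro ⟨f, hf, hcf⟩ ⟨f', hf', hcf'⟩ h
    have hFm : CoreBij.Fm k f = CoreBij.Fm k f' := congrArg Subtype.val h
    obtain ⟨N1, hN1⟩ := hf.2
    obtain ⟨N2, hN2⟩ := hf'.2
    have hN1' : f (N1 + N2) = 0 := by
      have := hf.1 (Nat.le_add_right N1 N2); omega
    have hN2' : f' (N1 + N2) = 0 := by
      have := hf'.1 (Nat.le_add_left N2 N1); omega
    exact Subtype.ext (CoreBij.inj_aux k (N1 + N2) f f' hf hf' hcf hcf' hN1' hN2' hFm)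
  have hsurj : Function.Surjective F := by
    rintro ⟨lam, hlam, hbd⟩
    obtain ⟨N, hN⟩ := hlam.2
    obtain ⟨f, hf, hcf, hFm⟩ := CoreBij.surj_aux k N lam hlam hbd hN
    exact ⟨⟨f, hf, hcf⟩, Subtype.ext hFm⟩
  exact ⟨Equiv.ofBijective F ⟨hinj, hsurj⟩, fun κ i => rfl⟩
end
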